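/- Regard V_θ as a polynomial map ℝ³ → ℝ³ defined by the same formulas. For every θ ∈ [0,1], the Fréchet derivative of V_θ at the point c = (1/2,1/2,0) satisfies: DV_θ(c)(1,−1,0) = (3θ/2)·(1,−1,0) and DV_θ(c)(1,1,−2) = (2 − 3θ/2)·(1,1,−2). (So on the tangent space of the simplex, DV_θ(c) has eigenvalues 3θ/2 and 2 − 3θ/2 with eigenvectors (1,−1,0) and (1,1,−2).) -/

import Mathlib

open MeasureTheory ProbabilityTheory Filter Topology
open scoped ENNReal

noncomputable section

/-- The cubic stochastic operator `V_θ`, regarded as a map on (Euclidean) `ℝ³`. -/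
def Vcso (θ : ℝ) (x : EuclideanSpace ℝ (Fin 3)) : EuclideanSpace ℝ (Fin 3) :=
  !₂[x 0 * ((x 0)^2 + 3*θ*(x 0)*(x 1 + x 2) + 3*(1-θ)*((x 1)^2 + (x 2)^2) + 2*(x 1)*(x 2)),
    x 1 * ((x 1)^2 + 3*θ*(x 1)*(x 2 + x 0) + 3*(1-θ)*((x 2)^2 + (x 0)^2) + 2*(x 2)*(x 0)),
    x 2 * ((x 2)^2 + 3*θ*(x 2)*(x 0 + x 1) + 3*(1-θ)*((x 0)^2 + (x 1)^2) + 2*(x 0)*(x 1))]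

/-- The simplex `Δ² = {x ∈ ℝ³ : x₁,x₂,x₃ ≥ 0, x₁+x₂+x₃ = 1}`. -/
def simplex2 : Set (EuclideanSpace ℝ (Fin 3)) :=
  {x | 0 ≤ x 0 ∧ 0 ≤ x 1 ∧ 0 ≤ x 2 ∧ x 0 + x 1 + x 2 = 1}

/-- The random orbit `φ_n(x) = V_{θ_n} ∘ ⋯ ∘ V_{θ_1}(x)` driven by the sequence
`θ_1, θ_2, … = θs 0, θs 1, …`. -/
def phiRDS (θs : ℕ → ℝ) : ℕ → EuclideanSpace ℝ (Fin 3) → EuclideanSpace ℝ (Fin 3)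
  | 0, x => x
  | n+1, x => Vcso (θs n) (phiRDS θs n x)

/-- The vertex `e₁ = (1,0,0)`. -/
def e1 : EuclideanSpace ℝ (Fin 3) := !₂[1, 0, 0]

/-- The vertex `c = (1/2,1/2,0)`. -/
def cpt : EuclideanSpace ℝ (Fin 3) := !₂[1/2, 1/2, 0]

/-- The vertex `C = (1/3,1/3,1/3)`. -/
def Cpt : EuclideanSpace ℝ (Fin 3) := !₂[1/3, 1/3, 1/3]

/-- `G₁ = {y ∈ Δ² : y₁ ≥ y₂ ≥ y₃}`. -/
def G1 : Set (EuclideanSpace ℝ (Fin 3)) :=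
  {y ∈ simplex2 | y 0 ≥ y 1 ∧ y 1 ≥ y 2}

/-- The interior of `G₁`: `{y ∈ Δ² : y₁ > y₂ > y₃ > 0}`. -/
def intG1 : Set (EuclideanSpace ℝ (Fin 3)) :=
  {y ∈ simplex2 | y 0 > y 1 ∧ y 1 > y 2 ∧ y 2 > 0}

/-- The edge `M₁₂ = {y ∈ Δ² : y₁ = y₂ ≥ y₃}`. -/
def M12 : Set (EuclideanSpace ℝ (Fin 3)) :=
  {y ∈ simplex2 | y 0 = y 1 ∧ y 1 ≥ y 2}

/-- The edge `M₂₃ = {y ∈ Δ² : y₁ ≥ y₂ = y₃}`. -/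
def M23 : Set (EuclideanSpace ℝ (Fin 3)) :=
  {y ∈ simplex2 | y 0 ≥ y 1 ∧ y 1 = y 2}

/-- The edge `Γ₁₂ = {y ∈ Δ² : y₁ ≥ y₂, y₃ = 0}`. -/
def Gamma12 : Set (EuclideanSpace ℝ (Fin 3)) :=
  {y ∈ simplex2 | y 0 ≥ y 1 ∧ y 2 = 0}

/-- The seven fixed points `𝒜`. -/
def fixedA : Set (EuclideanSpace ℝ (Fin 3)) :=
  {!₂[1,0,0], !₂[0,1,0], !₂[0,0,1], !₂[1/2,1/2,0], !₂[1/2,0,1/2], !₂[0,1/2,1/2], !₂[1/3,1/3,1/3]}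

/-- Positive part of `log t`, valued in `ℝ≥0∞`. -/
def logPos (t : ℝ) : ℝ≥0∞ := ENNReal.ofReal (Real.log t)

/-- Negative part of the extended logarithm (with `log 0 = -∞`), valued in `ℝ≥0∞`. -/
def logNeg (t : ℝ) : ℝ≥0∞ := if t ≤ 0 then ⊤ else ENNReal.ofReal (-Real.log t)

/-- `E log g(Θ) < 0` in the extended sense (the value `-∞` is allowed), where `Θ` has law `μ`:
the positive part of the extended expectation is strictly smaller than the negative part. -/
def expLogNeg (μ : Measure ℝ) (g : ℝ → ℝ) : Prop :=
  ∫⁻ θ, logPos (g θ) ∂μ < ∫⁻ θ, logNeg (g θ) ∂μ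

/-- `E log g(Θ) ≤ r` in the extended sense (the value `-∞` is allowed), where `Θ` has law `μ`. -/
def expLogLe (μ : Measure ℝ) (g : ℝ → ℝ) (r : ℝ) : Prop :=
  ∫⁻ θ, logPos (g θ) ∂μ + ENNReal.ofReal (-r) ≤ ∫⁻ θ, logNeg (g θ) ∂μ + ENNReal.ofReal r

/-- The topological support of a measure on `ℝ`: points all of whose open neighborhoods
have positive measure. -/
def measSupport (μ : Measure ℝ) : Set ℝ :=
  {t : ℝ | ∀ U : Set ℝ, IsOpen U → t ∈ U → 0 < μ U}

/-! Every coordinate of `V_θ` is the same cubic `component θ` evaluated at the cyclically shifted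
coordinates `(x i, x (i+1), x (i+2))`, so a single chain-rule computation gives all rows of the
Jacobian. At `c = (1/2,1/2,0)` the rows are `(3/2 ± 3θ/4, 3/2 ∓ 3θ/4, 1/2 + 3θ/4)` and
`(0, 0, 2 - 3θ/2)`, which send `(1,-1,0)` and `(1,1,-2)` to the stated multiples. -/

theorem fderiv_piLp_apply {𝕜 ι E : Type*} {F : ι → Type*} [NontriviallyNormedField 𝕜]
    [NormedAddCommGroup E] [NormedSpace 𝕜 E] [∀ i, NormedAddCommGroup (F i)]
    [∀ i, NormedSpace 𝕜 (F i)] [Fintype ι] {p : ℝ≥0∞} [Fact (1 ≤ p)] {f : E → PiLp p F} {x : E}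
    (hf : DifferentiableAt 𝕜 f x) (v : E) (i : ι) :
    fderiv 𝕜 f x v i = fderiv 𝕜 (fun y => f y i) x v :=
  (congrArg (· v) ((PiLp.proj p F i).hasFDerivAt.comp x hf.hasFDerivAt).fderiv).symm

namespace Vcso

def component (θ a b c : ℝ) : ℝ :=
  a * (a ^ 2 + 3 * θ * a * (b + c) + 3 * (1 - θ) * (b ^ 2 + c ^ 2) + 2 * b * c)

theorem apply_eq_component (θ : ℝ) (x : EuclideanSpace ℝ (Fin 3)) (i : Fin 3) :
    Vcso θ x i = component θ (x i) (x (i + 1)) (x (i + 2)) := by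
  fin_cases i <;> rfl

theorem hasFDerivAt_component {E : Type*} [NormedAddCommGroup E] [NormedSpace ℝ E]
    {f g h : E → ℝ} {f' g' h' : E →L[ℝ] ℝ} {x : E} (θ : ℝ)
    (hf : HasFDerivAt f f' x) (hg : HasFDerivAt g g' x) (hh : HasFDerivAt h h' x) :
    HasFDerivAt (fun y => component θ (f y) (g y) (h y))
      ((3 * f x ^ 2 + 6 * θ * f x * (g x + h x) + 3 * (1 - θ) * (g x ^ 2 + h x ^ 2)
          + 2 * g x * h x) • f'
        + (3 * θ * f x ^ 2 + 6 * (1 - θ) * f x * g x + 2 * f x * h x) • g'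
        + (3 * θ * f x ^ 2 + 6 * (1 - θ) * f x * h x + 2 * f x * g x) • h') x := by
  refine (hf.mul ((((hf.pow 2).add ((hf.const_mul (3 * θ)).mul (hg.add hh))).add
    (((hg.pow 2).add (hh.pow 2)).const_mul (3 * (1 - θ)))).add
      ((hg.const_mul 2).mul hh))).congr_fderiv ?_
  ext v
  simp only [nsmul_eq_mul, Nat.cast_ofNat, Pi.add_apply, Pi.mul_apply, add_apply, smul_apply,
    smul_eq_mul]
  ring

theorem hasFDerivAt_coord (θ : ℝ) (x : EuclideanSpace ℝ (Fin 3)) (i : Fin 3) :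
    HasFDerivAt (fun y => Vcso θ y i)
      ((3 * x i ^ 2 + 6 * θ * x i * (x (i + 1) + x (i + 2))
          + 3 * (1 - θ) * (x (i + 1) ^ 2 + x (i + 2) ^ 2) + 2 * x (i + 1) * x (i + 2))
            • EuclideanSpace.proj (𝕜 := ℝ) i
        + (3 * θ * x i ^ 2 + 6 * (1 - θ) * x i * x (i + 1) + 2 * x i * x (i + 2))
            • EuclideanSpace.proj (𝕜 := ℝ) (i + 1)
        + (3 * θ * x i ^ 2 + 6 * (1 - θ) * x i * x (i + 2) + 2 * x i * x (i + 1))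
            • EuclideanSpace.proj (𝕜 := ℝ) (i + 2)) x := by
  simp_rw [apply_eq_component]
  exact hasFDerivAt_component θ (PiLp.hasFDerivAt_apply 2 x i) (PiLp.hasFDerivAt_apply 2 x _)
    (PiLp.hasFDerivAt_apply 2 x _)

theorem differentiable (θ : ℝ) : Differentiable ℝ (Vcso θ) := fun x =>
  (differentiableAt_piLp 2).2 fun i => (hasFDerivAt_coord θ x i).differentiableAt

end Vcso

/-- DV_θ(c) has eigenvalues 3θ/2 and 2 - 3θ/2 on the tangent space of the simplex, with
eigenvectors (1,-1,0) and (1,1,-2). -/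
theorem fderiv_at_c_eigenvalues :
    ∀ θ ∈ Set.Icc (0:ℝ) 1,
      fderiv ℝ (Vcso θ) cpt (!₂[1, -1, 0] : EuclideanSpace ℝ (Fin 3)) =
        (3 * θ / 2) • (!₂[1, -1, 0] : EuclideanSpace ℝ (Fin 3)) ∧
      fderiv ℝ (Vcso θ) cpt (!₂[1, 1, -2] : EuclideanSpace ℝ (Fin 3)) =
        (2 - 3 * θ / 2) • (!₂[1, 1, -2] : EuclideanSpace ℝ (Fin 3)) := by
  intro θ _
  constructor <;> ext i <;>
    rw [fderiv_piLp_apply (Vcso.differentiable θ cpt), (Vcso.hasFDerivAt_coord θ cpt i).fderiv] <;>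
    fin_cases i <;>
    simp only [cpt, Fin.reduceFinMk, Fin.isValue, Fin.reduceAdd, Matrix.cons_val, add_apply, smul_apply,
      PiLp.proj_apply, PiLp.smul_apply, smul_eq_mul] <;>
    ring
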